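/- With the notation of the context, suppose that a(t) has degree d and all of its coefficients a_0, …, a_d are positive integers, and fix 1 ≤ k ≤ ⌊d/2⌋. If either (n and d are both even and n ≥ d/(d+1−2k)) or n ≥ (d+1)/(d+1−2k), then a'_k > a'_{k−1}. -/

import Mathlib

/-!
With `P = (1 + t + ⋯ + t^(n-1))^(d+1)` one has `(1-t)^(-(d+1)) = P(t) (1-t^n)^(-(d+1))`, so the
`j`-th coefficient of `U_n h` is the coefficient of `t^(nj)` in `h P`: `U_n h` is the contraction
of `h P` by `n`. The symmetries of `a'` and `b'` give `a'_k - a'_(k-1) = (U_n h)_k - (U_n h)_(d+1-k)`,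
and since `b P` is symmetric about `n(d+1)/2` and `a P` about `(n(d+1)-1)/2`, this equals
`(a P)_(nk) - (a P)_(nk-1)`. The coefficients of `P` are symmetric and strictly increase up to the
middle; the hypothesis on `n` gives `2nk ≤ (n-1)(d+1) + 1`, so `nk` is at most one step past the
middle, and as `a` has positive coefficients the difference is positive.
-/

open Polynomial

/-- `ehrG d p m = ∑_{i=0}^{d} p_i * C(m+d-i, d)`, the value at `m` of the polynomial `g`
associated to `p` by `p(t)/(1-t)^(d+1) = ∑_{m ≥ 0} g(m) tᵐ`. -/
def ehrG (d : ℕ) (p : Polynomial ℤ) (m : ℕ) : ℤ :=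
  ∑ i ∈ Finset.range (d + 1), p.coeff i * ((m + d - i).choose d : ℤ)

open Finset

theorem Nat.le_mul_of_cast_div_le {x y n : ℕ} (hy : 0 < y) (h : (x : ℚ) / y ≤ n) : x ≤ n * y := by
  rw [div_le_iff₀ (by exact_mod_cast hy)] at h
  exact_mod_cast h

section

variable {R : Type*}

theorem reflect_eq_self_of_coeff [Semiring R] {N : ℕ} {p : R[X]}
    (hsym : ∀ i ≤ N, p.coeff i = p.coeff (N - i)) : reflect N p = p := by
  ext i
  rw [coeff_reflect]
  by_cases hi : i ≤ N
  · rw [revAt_le hi, hsym i hi]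
  · rw [← revAtFun_eq, revAtFun, if_neg hi]

theorem coeff_eq_coeff_sub_of_reflect_eq [Semiring R] {N : ℕ} {p : R[X]} (h : reflect N p = p)
    {i : ℕ} (hi : i ≤ N) : p.coeff i = p.coeff (N - i) := by
  conv_lhs => rw [← h, coeff_reflect, revAt_le hi]

theorem reflect_pow_eq_self [CommSemiring R] {N : ℕ} {p : R[X]} (hp : p.natDegree ≤ N)
    (h : reflect N p = p) (m : ℕ) : reflect (N * m) (p ^ m) = p ^ m := by
  induction m with
  | zero => simp
  | succ m ih =>
    rw [pow_succ, mul_add_one,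
      reflect_mul _ _ (natDegree_pow_le_of_le m hp |>.trans_eq (mul_comm _ _)) hp, ih, h]

theorem coeff_add_sub_coeff_add [Ring R] {N i : ℕ} {a b : R[X]}
    (ha : ∀ j ≤ N, a.coeff j = a.coeff (N - j))
    (hb : ∀ j ≤ N + 1, b.coeff j = b.coeff (N + 1 - j)) (hi₀ : 1 ≤ i) (hi : i ≤ N + 1) :
    (a + b).coeff i - (a + b).coeff (N + 1 - i) = a.coeff i - a.coeff (i - 1) := by
  rw [coeff_add, coeff_add, ha (N + 1 - i) (by omega), hb i hi,
    show N - (N + 1 - i) = i - 1 by omega]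
  abel

theorem natDegree_contract_le [CommSemiring R] {n d : ℕ} (hn : n ≠ 0) {f : R[X]}
    (hf : f.natDegree < n * (d + 1)) : (contract n f).natDegree ≤ d :=
  natDegree_le_iff_coeff_eq_zero.mpr fun j hj => by
    rw [coeff_contract hn]
    exact coeff_eq_zero_of_natDegree_lt (hf.trans_le (by rw [mul_comm]; gcongr; omega))

theorem PowerSeries.coeff_coe_mul_expand [CommRing R] {n : ℕ} (hn : n ≠ 0)
    (f : R[X]) (g : PowerSeries R) (m : ℕ) :
    coeff (n * m) ((f : PowerSeries R) * expand n hn g) =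
      coeff m ((contract n f : PowerSeries R) * g) := by
  have hinj : Function.Injective fun x : ℕ × ℕ => (n * x.1, n * x.2) := fun x y hxy => by
    simpa [Prod.ext_iff, hn] using hxy
  rw [coeff_mul, coeff_mul, ← sum_subset (s₁ := (antidiagonal m).map ⟨_, hinj⟩), sum_map]
  · simp only [Function.Embedding.coeFn_mk, coeff_expand_mul, Polynomial.coeff_coe,
      coeff_contract hn, mul_comm _ n]
  · intro x hx
    simp only [mem_map, HasAntidiagonal.mem_antidiagonal, Function.Embedding.coeFn_mk] at hx ⊢
    obtain ⟨y, hy, rfl⟩ := hx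
    rw [← mul_add, hy]
  · rintro ⟨x, y⟩ hxy hx
    simp only [mem_map, HasAntidiagonal.mem_antidiagonal, Function.Embedding.coeFn_mk, not_exists,
      not_and] at hxy hx
    by_cases hy : n ∣ y
    · obtain ⟨y', rfl⟩ := hy
      obtain ⟨x', rfl⟩ : n ∣ x :=
        (Nat.dvd_add_left (dvd_mul_right n y')).mp (hxy ▸ dvd_mul_right n m)
      exact absurd rfl (hx (x', y') (by simpa [← mul_add, hn] using hxy))
    · rw [coeff_expand_of_not_dvd n hn _ hy, mul_zero]

end

noncomputable def geomPoly (n : ℕ) : ℤ[X] := ∑ i ∈ range n, X ^ i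

theorem coeff_geomPoly (n r : ℕ) : (geomPoly n).coeff r = if r < n then 1 else 0 := by
  simp [geomPoly, coeff_X_pow]

theorem natDegree_geomPoly_le (n : ℕ) : (geomPoly n).natDegree ≤ n - 1 :=
  natDegree_le_iff_coeff_eq_zero.mpr fun r hr => by
    rw [coeff_geomPoly, if_neg (by omega)]

theorem natDegree_geomPoly_pow_le (n m : ℕ) : (geomPoly n ^ m).natDegree ≤ (n - 1) * m :=
  natDegree_pow_le_of_le m (natDegree_geomPoly_le n) |>.trans_eq (mul_comm _ _)

theorem reflect_geomPoly_pow (n m : ℕ) :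
    reflect ((n - 1) * m) (geomPoly n ^ m) = geomPoly n ^ m :=
  reflect_pow_eq_self (natDegree_geomPoly_le n) (reflect_eq_self_of_coeff
    fun i hi => by simp only [coeff_geomPoly]; split_ifs <;> omega) m

theorem coeff_geomPoly_pow_zero {n : ℕ} (hn : n ≠ 0) (m : ℕ) : (geomPoly n ^ m).coeff 0 = 1 := by
  rw [coeff_zero_eq_eval_zero, eval_pow, ← coeff_zero_eq_eval_zero, coeff_geomPoly,
    if_pos (Nat.pos_of_ne_zero hn), one_pow]

theorem coeff_geomPoly_pow_succ_sub (n m r : ℕ) :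
    (geomPoly n ^ (m + 1)).coeff (r + 1) - (geomPoly n ^ (m + 1)).coeff r =
      (geomPoly n ^ m).coeff (r + 1) -
        if n ≤ r + 1 then (geomPoly n ^ m).coeff (r + 1 - n) else 0 := by
  have key : (1 - X) * geomPoly n ^ (m + 1) = (1 - X ^ n) * geomPoly n ^ m := by
    rw [pow_succ', ← mul_assoc, geomPoly, mul_neg_geom_sum]
  have := congrArg (coeff · (r + 1)) key
  simp only [sub_mul, one_mul, coeff_sub, coeff_X_mul, coeff_X_pow_mul'] at this
  linear_combination this

theorem coeff_geomPoly_pow_lt_succ {n m r : ℕ} (hn : 2 ≤ n) (hm : 1 ≤ m)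
    (hstrict : 2 ≤ m → StrictMonoOn (geomPoly n ^ m).coeff (Set.Iic ((n - 1) * m / 2)))
    (hr : 2 * (r + 1) ≤ (n - 1) * (m + 1)) :
    (geomPoly n ^ (m + 1)).coeff r < (geomPoly n ^ (m + 1)).coeff (r + 1) := by
  have hrec := coeff_geomPoly_pow_succ_sub n m r
  suffices (if n ≤ r + 1 then (geomPoly n ^ m).coeff (r + 1 - n) else 0) <
      (geomPoly n ^ m).coeff (r + 1) by linarith
  set N := (n - 1) * m with hN
  have hNsucc : (n - 1) * (m + 1) = N + (n - 1) := by rw [hN, mul_add_one]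
  split_ifs with hnr
  · have hm2 : 2 ≤ m := by
      by_contra! hm1
      obtain rfl : m = 1 := by omega
      omega
    have hN2 : (n - 1) * 2 ≤ N := Nat.mul_le_mul_left _ hm2
    by_cases hr' : 2 * (r + 1) ≤ N
    · exact hstrict hm2 (Set.mem_Iic.2 (by omega)) (Set.mem_Iic.2 (by omega)) (by omega)
    · -- past the centre, reflect `r + 1` to `N - (r + 1)`, which still lies above `r + 1 - n`
      rw [coeff_eq_coeff_sub_of_reflect_eq (reflect_geomPoly_pow n m) (by omega : r + 1 ≤ N)]
      exact hstrict hm2 (Set.mem_Iic.2 (by omega)) (Set.mem_Iic.2 (by omega)) (by omega)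
  · rcases hm.eq_or_lt with rfl | hm2
    · rw [pow_one, coeff_geomPoly, if_pos (by omega)]
      norm_num
    · have hN2 : (n - 1) * 2 ≤ N := Nat.mul_le_mul_left _ hm2
      calc (0 : ℤ) < 1 := one_pos
        _ = (geomPoly n ^ m).coeff 0 := (coeff_geomPoly_pow_zero (by omega) m).symm
        _ < (geomPoly n ^ m).coeff (r + 1) :=
          hstrict hm2 (by simp) (Set.mem_Iic.2 (by omega)) (by omega)

theorem strictMonoOn_coeff_geomPoly_pow {n m : ℕ} (hn : 2 ≤ n) (hm : 2 ≤ m) :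
    StrictMonoOn (geomPoly n ^ m).coeff (Set.Iic ((n - 1) * m / 2)) := by
  induction m, hm using Nat.le_induction with
  | base =>
    refine strictMonoOn_Iic_of_lt_succ fun r hr => ?_
    exact coeff_geomPoly_pow_lt_succ hn le_rfl (fun h => absurd h (by norm_num)) (by omega)
  | succ m hm ih =>
    refine strictMonoOn_Iic_of_lt_succ fun r hr => ?_
    exact coeff_geomPoly_pow_lt_succ hn (by omega) (fun _ => ih) (by omega)

theorem coeff_geomPoly_pow_le_succ {n m r : ℕ} (hn : 2 ≤ n) (hm : 2 ≤ m)
    (hr : 2 * (r + 1) ≤ (n - 1) * m + 1) :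
    (geomPoly n ^ m).coeff r ≤ (geomPoly n ^ m).coeff (r + 1) := by
  by_cases hr' : 2 * (r + 1) ≤ (n - 1) * m
  · exact (strictMonoOn_coeff_geomPoly_pow hn hm (Set.mem_Iic.2 (by omega))
      (Set.mem_Iic.2 (by omega)) (by omega)).le
  · rw [coeff_eq_coeff_sub_of_reflect_eq (reflect_geomPoly_pow n m) (by omega : r ≤ (n - 1) * m),
      show (n - 1) * m - r = r + 1 by omega]

theorem coeff_mul_lt_coeff_mul_succ {a P : ℤ[X]} {s i : ℕ} (ha : ∀ j, 0 ≤ a.coeff j)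
    (hP₀ : 0 ≤ P.coeff 0) (hP : ∀ j ≤ s, P.coeff j ≤ P.coeff (j + 1)) (hi : i ≤ s)
    (hai : 0 < a.coeff i) (hPi : P.coeff (s - i) < P.coeff (s - i + 1)) :
    (a * P).coeff s < (a * P).coeff (s + 1) := by
  -- `(a P)_(s+1) - (a P)_s = a_(s+1) P_0 + ∑_(i ≤ s) a_i (P_(s-i+1) - P_(s-i))`
  rw [coeff_mul, coeff_mul, Nat.sum_antidiagonal_succ']
  have hsum : ∑ x ∈ antidiagonal s, a.coeff x.1 * P.coeff x.2 <
      ∑ x ∈ antidiagonal s, a.coeff x.1 * P.coeff (x.2 + 1) := by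
    refine sum_lt_sum (fun x hx => ?_) ⟨(i, s - i), by simp [hi], mul_lt_mul_of_pos_left hPi hai⟩
    have := HasAntidiagonal.mem_antidiagonal.mp hx
    exact mul_le_mul_of_nonneg_left (hP _ (by omega)) (ha _)
  linarith [mul_nonneg (ha (s + 1)) hP₀]

theorem coeff_mul_geomPoly_pow_lt_succ {a : ℤ[X]} {n m s : ℕ} (ha : ∀ j, 0 ≤ a.coeff j)
    (ha₀ : 0 < a.coeff 0) (ha₁ : 0 < a.coeff 1) (hn : 2 ≤ n) (hm : 2 ≤ m)
    (hs : 2 * (s + 1) ≤ (n - 1) * m + 1) :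
    (a * geomPoly n ^ m).coeff s < (a * geomPoly n ^ m).coeff (s + 1) := by
  have hmono : ∀ j ≤ s, (geomPoly n ^ m).coeff j ≤ (geomPoly n ^ m).coeff (j + 1) :=
    fun j hj => coeff_geomPoly_pow_le_succ hn hm (by omega)
  have h₀ : 0 ≤ (geomPoly n ^ m).coeff 0 := by rw [coeff_geomPoly_pow_zero (by omega)]; norm_num
  have hstrict := strictMonoOn_coeff_geomPoly_pow hn hm
  have hm2 : (n - 1) * 2 ≤ (n - 1) * m := Nat.mul_le_mul_left _ hm
  by_cases hs' : 2 * (s + 1) ≤ (n - 1) * m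
  · exact coeff_mul_lt_coeff_mul_succ ha h₀ hmono s.zero_le ha₀
      (hstrict (Set.mem_Iic.2 (by omega)) (Set.mem_Iic.2 (by omega)) (by omega))
  · -- at the odd centre the step `s → s + 1` is flat, so use the step just below it
    exact coeff_mul_lt_coeff_mul_succ ha h₀ hmono (by omega : 1 ≤ s) ha₁
      (hstrict (Set.mem_Iic.2 (by omega)) (Set.mem_Iic.2 (by omega)) (by omega))

theorem ehrG_eq_coeff_mul_invOneSubPow {d : ℕ} {p : ℤ[X]} (hp : p.natDegree ≤ d) (m : ℕ) :
    ehrG d p m =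
      PowerSeries.coeff m ((p : PowerSeries ℤ) * (PowerSeries.invOneSubPow ℤ (d + 1)).val) := by
  conv_rhs =>
    rw [as_sum_range_C_mul_X_pow' (p := p) (Nat.lt_succ_of_le hp),
      ← coeToPowerSeries.ringHom_apply]
  simp only [map_sum, map_mul, map_pow, coeToPowerSeries.ringHom_apply, coe_C, coe_X,
    sum_mul, mul_assoc, PowerSeries.coeff_C_mul, PowerSeries.coeff_X_pow_mul',
    PowerSeries.invOneSubPow_val_succ_eq_mk_add_choose, PowerSeries.coeff_mk]
  refine sum_congr rfl fun i hid => ?_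
  split_ifs with hi
  · rw [show m + d - i = d + (m - i) by omega]
  · have := mem_range.1 hid
    rw [Nat.choose_eq_zero_of_lt (by omega), Nat.cast_zero, mul_zero]

theorem ehrG_injective {d : ℕ} {p q : ℤ[X]} (hp : p.natDegree ≤ d) (hq : q.natDegree ≤ d)
    (h : ∀ m, ehrG d p m = ehrG d q m) : p = q := by
  have : (p : PowerSeries ℤ) * (PowerSeries.invOneSubPow ℤ (d + 1)).val =
      q * (PowerSeries.invOneSubPow ℤ (d + 1)).val := by
    ext m
    rw [← ehrG_eq_coeff_mul_invOneSubPow hp, ← ehrG_eq_coeff_mul_invOneSubPow hq, h]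
  exact Polynomial.coe_inj.mp ((Units.mul_left_inj _).mp this)

theorem coe_geomPoly_pow_mul_expand {n : ℕ} (hn : n ≠ 0) (d : ℕ) :
    ((geomPoly n ^ (d + 1) : ℤ[X]) : PowerSeries ℤ) *
        PowerSeries.expand n hn (PowerSeries.invOneSubPow ℤ (d + 1)).val =
      (PowerSeries.invOneSubPow ℤ (d + 1)).val := by
  set S := (PowerSeries.invOneSubPow ℤ (d + 1)).val
  have hS : S * (1 - PowerSeries.X) ^ (d + 1) = 1 :=
    PowerSeries.mk_add_choose_mul_one_sub_pow_eq_one ℤ d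
  have hG : ((geomPoly n : ℤ[X]) : PowerSeries ℤ) = ∑ i ∈ range n, PowerSeries.X ^ i := by
    rw [geomPoly, ← coeToPowerSeries.ringHom_apply, map_sum]
    simp
  calc ((geomPoly n ^ (d + 1) : ℤ[X]) : PowerSeries ℤ) * PowerSeries.expand n hn S
      = S * ((1 - PowerSeries.X) * ∑ i ∈ range n, PowerSeries.X ^ i) ^ (d + 1) *
          PowerSeries.expand n hn S := by
        rw [mul_pow, ← mul_assoc, hS, one_mul, Polynomial.coe_pow, hG]
    _ = S * PowerSeries.expand n hn (S * (1 - PowerSeries.X) ^ (d + 1)) := by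
        rw [mul_neg_geom_sum, map_mul, map_pow, map_sub, map_one, PowerSeries.expand_X]; ring
    _ = S := by rw [hS, map_one, mul_one]

theorem eq_contract_of_ehrG_eq {d n : ℕ} (hn : n ≠ 0) {h U : ℤ[X]} (hh : h.natDegree ≤ d)
    (hU : U.natDegree ≤ d) (hUh : ∀ m, ehrG d U m = ehrG d h (n * m)) :
    U = contract n (h * geomPoly n ^ (d + 1)) := by
  have hdeg : (h * geomPoly n ^ (d + 1)).natDegree < n * (d + 1) := by
    obtain ⟨n, rfl⟩ := Nat.exists_eq_add_one_of_ne_zero hn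
    have := natDegree_mul_le.trans (add_le_add hh (natDegree_geomPoly_pow_le (n + 1) (d + 1)))
    rw [Nat.add_sub_cancel] at this
    nlinarith
  refine ehrG_injective hU (natDegree_contract_le hn hdeg) fun m => ?_
  rw [hUh, ehrG_eq_coeff_mul_invOneSubPow hh,
    ehrG_eq_coeff_mul_invOneSubPow (natDegree_contract_le hn hdeg),
    ← PowerSeries.coeff_coe_mul_expand hn, Polynomial.coe_mul, mul_assoc,
    coe_geomPoly_pow_mul_expand]

theorem coeff_contract_sub_coeff_contract {d n k : ℕ} (hn : n ≠ 0) {a b : ℤ[X]}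
    (hadeg : a.natDegree ≤ d) (hbdeg : b.natDegree ≤ d + 1)
    (hasym : ∀ i ≤ d, a.coeff i = a.coeff (d - i))
    (hbsym : ∀ i ≤ d + 1, b.coeff i = b.coeff (d + 1 - i)) (hk₀ : 1 ≤ k) (hk : k ≤ d + 1) :
    (contract n ((a + b) * geomPoly n ^ (d + 1))).coeff k -
        (contract n ((a + b) * geomPoly n ^ (d + 1))).coeff (d + 1 - k) =
      (a * geomPoly n ^ (d + 1)).coeff (n * k) - (a * geomPoly n ^ (d + 1)).coeff (n * k - 1) := by
  set N := (n - 1) * (d + 1)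
  have hN : d + N + 1 = n * (d + 1) := by
    obtain ⟨n, rfl⟩ := Nat.exists_eq_add_one_of_ne_zero hn
    simp only [N, Nat.add_sub_cancel]
    ring
  have hkn : (d + 1 - k) * n = d + N + 1 - n * k := by
    rw [Nat.sub_mul, hN, mul_comm n, mul_comm k]
  have haP : reflect (d + N) (a * geomPoly n ^ (d + 1)) = a * geomPoly n ^ (d + 1) := by
    rw [reflect_mul _ _ hadeg (natDegree_geomPoly_pow_le n (d + 1)),
      reflect_eq_self_of_coeff hasym, reflect_geomPoly_pow]
  have hbP : reflect (d + N + 1) (b * geomPoly n ^ (d + 1)) = b * geomPoly n ^ (d + 1) := by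
    rw [add_right_comm, reflect_mul _ _ hbdeg (natDegree_geomPoly_pow_le n (d + 1)),
      reflect_eq_self_of_coeff hbsym, reflect_geomPoly_pow]
  rw [coeff_contract hn, coeff_contract hn, add_mul, hkn, mul_comm k]
  exact coeff_add_sub_coeff_add (fun j hj => coeff_eq_coeff_sub_of_reflect_eq haP hj)
    (fun j hj => coeff_eq_coeff_sub_of_reflect_eq hbP hj) (Nat.mul_pos (by omega) hk₀)
    (by rw [hN]; exact Nat.mul_le_mul_left n hk)

theorem stmt18_general (d n : ℕ)
    (h Uh a b a' b' : Polynomial ℤ)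
    (hdeg : h.natDegree ≤ d)
    (hUdeg : Uh.natDegree ≤ d)
    (hU : ∀ m : ℕ, ehrG d Uh m = ehrG d h (n * m))
    -- h = a + b, the symmetric decomposition of h
    (hab : h = a + b)
    (hadeg : a.natDegree ≤ d) (hbdeg : b.natDegree ≤ d + 1)
    (hasym : ∀ i ≤ d, a.coeff i = a.coeff (d - i))
    (hbsym : ∀ i ≤ d + 1, b.coeff i = b.coeff (d + 1 - i))
    -- U_n h = a' + b', the symmetric decomposition of U_n h
    (hab' : Uh = a' + b')
    (ha'sym : ∀ i ≤ d, a'.coeff i = a'.coeff (d - i))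
    (hb'sym : ∀ i ≤ d + 1, b'.coeff i = b'.coeff (d + 1 - i))
    -- a has degree d and positive coefficients
    (hapos : ∀ i ≤ d, 0 < a.coeff i)
    -- fix 1 ≤ k ≤ ⌊d/2⌋
    (k : ℕ) (hk1 : 1 ≤ k) (hk2 : 2 * k ≤ d)
    -- either n and d are both even and n ≥ d/(d+1-2k), or n ≥ (d+1)/(d+1-2k)
    (hcond :
      (n % 2 = 0 ∧ d % 2 = 0 ∧ (d : ℚ) / ((d + 1 - 2 * k : ℕ) : ℚ) ≤ (n : ℚ)) ∨
        ((d : ℚ) + 1) / ((d + 1 - 2 * k : ℕ) : ℚ) ≤ (n : ℚ)) :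
    a'.coeff (k - 1) < a'.coeff k := by
  have hd_le : d ≤ n * (d + 1 - 2 * k) := by
    have hpos : 0 < d + 1 - 2 * k := by omega
    rcases hcond with ⟨-, -, hq⟩ | hq
    · exact Nat.le_mul_of_cast_div_le hpos hq
    · exact d.le_succ.trans (Nat.le_mul_of_cast_div_le hpos (by exact_mod_cast hq))
  have hn : 2 ≤ n := by
    by_contra! hn
    interval_cases n <;> omega
  have hnk₁ : 1 ≤ n * k := Nat.mul_pos (by omega) hk1
  have hcentre : 2 * (n * k - 1 + 1) ≤ (n - 1) * (d + 1) + 1 := by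
    rw [Nat.sub_add_cancel hnk₁]
    zify [(by omega : 1 ≤ n), (by omega : 2 * k ≤ d + 1)] at hd_le ⊢
    linarith
  have key := coeff_contract_sub_coeff_contract (by omega : n ≠ 0) hadeg hbdeg hasym hbsym hk1
    (by omega : k ≤ d + 1)
  rw [← hab, ← eq_contract_of_ehrG_eq (by omega) hdeg hUdeg hU, hab',
    coeff_add_sub_coeff_add ha'sym hb'sym hk1 (by omega)] at key
  have ha : ∀ j, 0 ≤ a.coeff j := fun j => by
    rcases le_or_gt j d with hj | hj
    · exact (hapos j hj).le
    · rw [coeff_eq_zero_of_natDegree_lt (by omega)]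
  have hlt := coeff_mul_geomPoly_pow_lt_succ ha (hapos 0 (by omega)) (hapos 1 (by omega)) hn
    (by omega : 2 ≤ d + 1) hcentre
  rw [Nat.sub_add_cancel hnk₁] at hlt
  linarith

theorem stmt18 (d n : ℕ) (hd : 0 < d) (hn : 0 < n)
    (h Uh a b a' b' : Polynomial ℤ)
    (hdeg : h.natDegree ≤ d)
    (hUdeg : Uh.natDegree ≤ d)
    (hU : ∀ m : ℕ, ehrG d Uh m = ehrG d h (n * m))
    -- h = a + b, the symmetric decomposition of h
    (hab : h = a + b)
    (hadeg : a.natDegree ≤ d) (hbdeg : b.natDegree ≤ d + 1)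
    (hasym : ∀ i ≤ d, a.coeff i = a.coeff (d - i))
    (hbsym : ∀ i ≤ d + 1, b.coeff i = b.coeff (d + 1 - i))
    -- U_n h = a' + b', the symmetric decomposition of U_n h
    (hab' : Uh = a' + b')
    (ha'deg : a'.natDegree ≤ d) (hb'deg : b'.natDegree ≤ d + 1)
    (ha'sym : ∀ i ≤ d, a'.coeff i = a'.coeff (d - i))
    (hb'sym : ∀ i ≤ d + 1, b'.coeff i = b'.coeff (d + 1 - i))
    -- a has degree d and positive coefficients
    (hadegd : a.natDegree = d) (hapos : ∀ i ≤ d, 0 < a.coeff i)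
    -- fix 1 ≤ k ≤ ⌊d/2⌋
    (k : ℕ) (hk1 : 1 ≤ k) (hk2 : 2 * k ≤ d)
    -- either n and d are both even and n ≥ d/(d+1-2k), or n ≥ (d+1)/(d+1-2k)
    (hcond :
      (n % 2 = 0 ∧ d % 2 = 0 ∧ (d : ℚ) / ((d + 1 - 2 * k : ℕ) : ℚ) ≤ (n : ℚ)) ∨
        ((d : ℚ) + 1) / ((d + 1 - 2 * k : ℕ) : ℚ) ≤ (n : ℚ)) :
    a'.coeff (k - 1) < a'.coeff k :=
  stmt18_general d n h Uh a b a' b' hdeg hUdeg hU hab hadeg hbdeg hasym hbsym hab' ha'sym hb'sym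
    hapos k hk1 hk2 hcond
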